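/- arXiv:0710.3718 — 8 statements merged into one kernel-verified Lean document; each statement's English description precedes it below -/
import Mathlib

section
/- Let p > 3 be a prime and let G = Z/pZ. If U and V are square-free sequences over G with |U| = |V| = 3 (equivalently, 3-element subsets of G), then |U·V| ≥ 4. -/
/-!
The six sums `∑ aᵢ x_{σ i}`, `σ` a permutation of three letters, all lie in `U · V`.
Permutations of opposite parity differ by a transposition, so an even and an odd sum differ by
a product `(aᵢ - aⱼ) (x_k - x_l) ≠ 0`. Hence fewer than four values would force the three sums
of one parity to coincide; these coincidences are linear conditions which, since `3 ≠ 0`, make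
the three sums of the other parity pairwise distinct.
-/

/-- The weighted product set `S · T` of two sequences (multisets) over a commutative ring. -/
def wProd {G : Type*} [CommRing G] (S T : Multiset G) : Set G :=
  { g | ∃ l1 l2 : List G, (l1 : Multiset G) = S ∧ (l2 : Multiset G) = T ∧
      (List.zipWith (· * ·) l1 l2).sum = g }

lemma sum_zipWith_mem_wProd {G : Type*} [CommRing G] (l₁ : List G) {l₂ l₂' : List G}
    (h : l₂'.Perm l₂) : (List.zipWith (· * ·) l₁ l₂').sum ∈ wProd l₁ l₂ :=
  ⟨l₁, l₂', rfl, Multiset.coe_eq_coe.2 h, rfl⟩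

section ThreeByThree

variable {R : Type*} [CommRing R] {a b c x y z : R}

/-- The sums `∑ aᵢ x_{σ i}` over the even permutations `σ` of three letters; the odd ones are
`evenSums a b c x z y`. -/
def evenSums [DecidableEq R] (a b c x y z : R) : Finset R :=
  {a * x + b * y + c * z, a * y + b * z + c * x, a * z + b * x + c * y}

lemma evenSums_subset_wProd [DecidableEq R] :
    (evenSums a b c x y z : Set R) ⊆ wProd {a, b, c} {x, y, z} := by
  have mem {l : List R} (h : l.Perm [x, y, z]) :
      (List.zipWith (· * ·) [a, b, c] l).sum ∈ wProd {a, b, c} {x, y, z} :=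
    sum_zipWith_mem_wProd [a, b, c] h
  intro g hg
  simp only [evenSums, Finset.coe_insert, Finset.coe_singleton, Set.mem_insert_iff,
    Set.mem_singleton_iff] at hg
  rcases hg with rfl | rfl | rfl
  · simpa [add_assoc] using mem (List.rotate_perm [x, y, z] 0)
  · simpa [add_assoc] using mem (List.rotate_perm [x, y, z] 1)
  · simpa [add_assoc] using mem (List.rotate_perm [x, y, z] 2)

lemma evenSums_union_swap_subset_wProd [DecidableEq R] :
    (↑(evenSums a b c x y z ∪ evenSums a b c x z y) : Set R) ⊆ wProd {a, b, c} {x, y, z} := by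
  rw [Finset.coe_union]
  refine Set.union_subset evenSums_subset_wProd ?_
  rw [Multiset.pair_comm y z]
  exact evenSums_subset_wProd

variable [NoZeroDivisors R]

lemma ne_of_sub_eq_sub_mul_sub {s t p q u v : R} (hpq : p ≠ q) (huv : u ≠ v)
    (h : s - t = (p - q) * (u - v)) : s ≠ t := fun hst =>
  mul_ne_zero (sub_ne_zero.2 hpq) (sub_ne_zero.2 huv) (by rw [← h, hst, sub_self])

lemma disjoint_evenSums_swap [DecidableEq R] (hab : a ≠ b) (hac : a ≠ c) (hbc : b ≠ c)
    (hxy : x ≠ y) (hxz : x ≠ z) (hyz : y ≠ z) :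
    Disjoint (evenSums a b c x y z) (evenSums a b c x z y) := by
  rw [Finset.disjoint_left]
  intro s hs ht
  simp only [evenSums, Finset.mem_insert, Finset.mem_singleton] at hs ht
  rcases hs with rfl | rfl | rfl <;> rcases ht with h | h | h
  · exact ne_of_sub_eq_sub_mul_sub hbc hyz (by ring) h
  · exact ne_of_sub_eq_sub_mul_sub hac hxz (by ring) h
  · exact ne_of_sub_eq_sub_mul_sub hab hxy (by ring) h
  · exact ne_of_sub_eq_sub_mul_sub hac hxy.symm (by ring) h
  · exact ne_of_sub_eq_sub_mul_sub hab hyz (by ring) h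
  · exact ne_of_sub_eq_sub_mul_sub hbc hxz.symm (by ring) h
  · exact ne_of_sub_eq_sub_mul_sub hab hxz.symm (by ring) h
  · exact ne_of_sub_eq_sub_mul_sub hbc hxy (by ring) h
  · exact ne_of_sub_eq_sub_mul_sub hac hyz.symm (by ring) h

lemma odd_sums_ne_of_even_sums_eq (h3 : (3 : R) ≠ 0) (hbc : b ≠ c) (hyz : y ≠ z)
    (h₁ : a * x + b * y + c * z = a * y + b * z + c * x)
    (h₂ : a * y + b * z + c * x = a * z + b * x + c * y) :
    a * x + b * z + c * y ≠ a * z + b * y + c * x := by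
  intro h
  have hv : y - z ≠ 0 := sub_ne_zero.2 hyz
  have hb : a - 2 * b + c = 0 := by
    refine (mul_eq_zero.1 ?_).resolve_right hv
    linear_combination h - h₁
  have hy : x - 2 * y + z = 0 := by
    refine (mul_eq_zero.1 ?_).resolve_left (sub_ne_zero.2 hbc.symm)
    linear_combination h₂ - (y - z) * hb
  exact mul_ne_zero (mul_ne_zero h3 (sub_ne_zero.2 hbc)) hv
    (by linear_combination h₁ - (a - c) * hy - (y - z) * hb)

lemma card_evenSums_swap_eq_three [DecidableEq R] (h3 : (3 : R) ≠ 0) (hab : a ≠ b)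
    (hac : a ≠ c) (hbc : b ≠ c) (hyz : y ≠ z) (h : (evenSums a b c x y z).card ≤ 1) :
    (evenSums a b c x z y).card = 3 := by
  have e₀₁ : a * x + b * y + c * z = a * y + b * z + c * x :=
    Finset.card_le_one.1 h _ (by simp [evenSums]) _ (by simp [evenSums])
  have e₁₂ : a * y + b * z + c * x = a * z + b * x + c * y :=
    Finset.card_le_one.1 h _ (by simp [evenSums]) _ (by simp [evenSums])
  -- cyclically relabelling `a, b, c` permutes the even sums, so one lemma gives all three
  have o₀₁ := odd_sums_ne_of_even_sums_eq h3 hbc hyz e₀₁ e₁₂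
  have o₂₀ := odd_sums_ne_of_even_sums_eq (a := b) (b := c) (c := a) (x := x) (y := y) (z := z)
    h3 hac.symm hyz (by linear_combination e₁₂.symm - e₀₁) (by linear_combination e₀₁)
  have o₁₂ := odd_sums_ne_of_even_sums_eq (a := c) (b := a) (c := b) (x := x) (y := y) (z := z)
    h3 hab hyz (by linear_combination e₁₂) (by linear_combination e₁₂.symm - e₀₁)
  exact Finset.card_eq_three.2 ⟨_, _, _, o₀₁, fun e => o₂₀ (by linear_combination -e),
    fun e => o₁₂ (by linear_combination e), rfl⟩

lemma four_le_card_evenSums_union_swap [DecidableEq R] (h3 : (3 : R) ≠ 0) (hab : a ≠ b)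
    (hac : a ≠ c) (hbc : b ≠ c) (hxy : x ≠ y) (hxz : x ≠ z) (hyz : y ≠ z) :
    4 ≤ (evenSums a b c x y z ∪ evenSums a b c x z y).card := by
  rw [Finset.card_union_of_disjoint (disjoint_evenSums_swap hab hac hbc hxy hxz hyz)]
  have hE : 0 < (evenSums a b c x y z).card := Finset.card_pos.2 (Finset.insert_nonempty _ _)
  have hO : 0 < (evenSums a b c x z y).card := Finset.card_pos.2 (Finset.insert_nonempty _ _)
  have hE3 := card_evenSums_swap_eq_three (x := x) h3 hab hac hbc hyz
  have hO3 := card_evenSums_swap_eq_three (x := x) h3 hab hac hbc hyz.symm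
  omega

end ThreeByThree

theorem stmt1 (p : ℕ) (hp : p.Prime) (hp3 : 3 < p)
    (U V : Multiset (ZMod p)) (hU : U.Nodup) (hV : V.Nodup)
    (hUc : Multiset.card U = 3) (hVc : Multiset.card V = 3) :
    4 ≤ (wProd U V).ncard := by
  have : Fact p.Prime := ⟨hp⟩
  have h3 : (3 : ZMod p) ≠ 0 := by
    exact_mod_cast (ZMod.natCast_eq_zero_iff 3 p).not.2 (Nat.not_dvd_of_pos_of_lt three_pos hp3)
  obtain ⟨a, b, c, rfl⟩ := Multiset.card_eq_three.1 hUc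
  obtain ⟨x, y, z, rfl⟩ := Multiset.card_eq_three.1 hVc
  simp only [Multiset.insert_eq_cons, Multiset.nodup_cons, Multiset.mem_cons,
    Multiset.mem_singleton, Multiset.nodup_singleton, and_true, not_or] at hU hV
  obtain ⟨⟨hab, hac⟩, hbc⟩ := hU
  obtain ⟨⟨hxy, hxz⟩, hyz⟩ := hV
  calc 4 ≤ (evenSums a b c x y z ∪ evenSums a b c x z y).card :=
        four_le_card_evenSums_union_swap h3 hab hac hbc hxy hxz hyz
    _ = (↑(evenSums a b c x y z ∪ evenSums a b c x z y) : Set (ZMod p)).ncard :=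
        (Set.ncard_coe_finset _).symm
    _ ≤ (wProd {a, b, c} {x, y, z}).ncard :=
        Set.ncard_le_ncard evenSums_union_swap_subset_wProd
end

section
/- Let p > 7 be a prime and let G = Z/pZ. If U and V are square-free sequences over G with |U| = |V| = 3 and |U·V| = 4, then U·V is not an arithmetic progression in G. -/
/-- `A` is an arithmetic progression in `ZMod p`:
`A = {a, a + d, …, a + (|A| - 1) d}` for some `a` and some `d ≠ 0`. -/
def SetIsAP {p : ℕ} (A : Set (ZMod p)) : Prop :=
  ∃ d : ZMod p, d ≠ 0 ∧ ∃ a : ZMod p,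
    A = (fun i : ℕ => a + (i : ZMod p) * d) '' (Set.Iio A.ncard)

lemma key : ∀ n1 n2 n3 n4 n5 n6 : Fin 4,
    n1.val + n4.val + n5.val = n2.val + n3.val + n6.val →
    n1 ≠ n2 → n1 ≠ n3 → n1 ≠ n6 → n2 ≠ n4 → n2 ≠ n5 →
    n3 ≠ n4 → n3 ≠ n5 → n4 ≠ n6 → n5 ≠ n6 →
    (∀ k : Fin 4, k = n1 ∨ k = n2 ∨ k = n3 ∨ k = n4 ∨ k = n5 ∨ k = n6) → False := by
  decide

section perms
variable {α : Type*}

lemma coe3_xyz (x y z : α) : ([x,y,z] : Multiset α) = {x,y,z} := rfl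

lemma coe3_xzy (x y z : α) : ([x,z,y] : Multiset α) = {x,y,z} := by
  show x ::ₘ z ::ₘ y ::ₘ 0 = x ::ₘ y ::ₘ z ::ₘ 0
  rw [Multiset.cons_swap z y]

lemma coe3_yxz (x y z : α) : ([y,x,z] : Multiset α) = {x,y,z} := by
  show y ::ₘ x ::ₘ z ::ₘ 0 = x ::ₘ y ::ₘ z ::ₘ 0
  rw [Multiset.cons_swap y x]

lemma coe3_yzx (x y z : α) : ([y,z,x] : Multiset α) = {x,y,z} := by
  show y ::ₘ z ::ₘ x ::ₘ 0 = x ::ₘ y ::ₘ z ::ₘ 0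
  rw [Multiset.cons_swap z x, Multiset.cons_swap y x]

lemma coe3_zxy (x y z : α) : ([z,x,y] : Multiset α) = {x,y,z} := by
  show z ::ₘ x ::ₘ y ::ₘ 0 = x ::ₘ y ::ₘ z ::ₘ 0
  rw [Multiset.cons_swap z x, Multiset.cons_swap z y]

lemma coe3_zyx (x y z : α) : ([z,y,x] : Multiset α) = {x,y,z} := by
  show z ::ₘ y ::ₘ x ::ₘ 0 = x ::ₘ y ::ₘ z ::ₘ 0
  rw [Multiset.cons_swap z y, Multiset.cons_swap z x, Multiset.cons_swap y x]

lemma perm2 {v w b c : α} (h : ({v, w} : Multiset α) = {b, c}) :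
    (v = b ∧ w = c) ∨ (v = c ∧ w = b) := by
  have hv : v ∈ ({b, c} : Multiset α) := by rw [← h]; simp
  rcases Multiset.mem_cons.mp hv with rfl | hv
  · left
    refine ⟨rfl, ?_⟩
    have h2 : ({w} : Multiset α) = {c} := by
      have := (Multiset.cons_inj_right (s := ({w} : Multiset α)) (t := ({c} : Multiset α)) v).mp h
      exact this
    exact Multiset.singleton_inj.mp h2
  · have hvc : v = c := by simpa using hv
    right
    refine ⟨hvc, ?_⟩
    rw [hvc] at h
    rw [show ({b, c} : Multiset α) = {c, b} from Multiset.cons_swap b c 0] at h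
    have h2 : ({w} : Multiset α) = {b} :=
      (Multiset.cons_inj_right (s := ({w} : Multiset α)) (t := ({b} : Multiset α)) c).mp h
    exact Multiset.singleton_inj.mp h2

lemma perm3 {u v w a b c : α} (h : ({u, v, w} : Multiset α) = {a, b, c}) :
    (u = a ∧ v = b ∧ w = c) ∨ (u = a ∧ v = c ∧ w = b) ∨
    (u = b ∧ v = a ∧ w = c) ∨ (u = b ∧ v = c ∧ w = a) ∨
    (u = c ∧ v = a ∧ w = b) ∨ (u = c ∧ v = b ∧ w = a) := by
  have hu : u ∈ ({a, b, c} : Multiset α) := by rw [← h]; simp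
  have hu' : u = a ∨ u = b ∨ u = c := by simpa using hu
  rcases hu' with rfl | rfl | rfl
  · have h2 : ({v, w} : Multiset α) = {b, c} :=
      (Multiset.cons_inj_right u).mp h
    rcases perm2 h2 with ⟨rfl, rfl⟩ | ⟨rfl, rfl⟩
    · exact Or.inl ⟨rfl, rfl, rfl⟩
    · exact Or.inr (Or.inl ⟨rfl, rfl, rfl⟩)
  · rw [show ({a, u, c} : Multiset α) = u ::ₘ {a, c} from Multiset.cons_swap a u {c}] at h
    have h2 : ({v, w} : Multiset α) = {a, c} := (Multiset.cons_inj_right u).mp h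
    rcases perm2 h2 with ⟨rfl, rfl⟩ | ⟨rfl, rfl⟩
    · exact Or.inr (Or.inr (Or.inl ⟨rfl, rfl, rfl⟩))
    · exact Or.inr (Or.inr (Or.inr (Or.inl ⟨rfl, rfl, rfl⟩)))
  · rw [show ({a, b, u} : Multiset α) = u ::ₘ {a, b} by
      show a ::ₘ b ::ₘ u ::ₘ 0 = u ::ₘ a ::ₘ b ::ₘ 0
      rw [Multiset.cons_swap b u, Multiset.cons_swap a u]] at h
    have h2 : ({v, w} : Multiset α) = {a, b} := (Multiset.cons_inj_right u).mp h
    rcases perm2 h2 with ⟨rfl, rfl⟩ | ⟨rfl, rfl⟩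
    · exact Or.inr (Or.inr (Or.inr (Or.inr (Or.inl ⟨rfl, rfl, rfl⟩))))
    · exact Or.inr (Or.inr (Or.inr (Or.inr (Or.inr ⟨rfl, rfl, rfl⟩))))

end perms

theorem stmt2 (p : ℕ) (hp : p.Prime) (hp7 : 7 < p)
    (U V : Multiset (ZMod p)) (hU : U.Nodup) (hV : V.Nodup)
    (hUc : Multiset.card U = 3) (hVc : Multiset.card V = 3)
    (hcard : (wProd U V).ncard = 4) :
    ¬ SetIsAP (wProd U V) := by
  intro hAP
  haveI : Fact p.Prime := ⟨hp⟩
  obtain ⟨a, b, c, rfl⟩ := Multiset.card_eq_three.mp hUc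
  obtain ⟨x, y, z, rfl⟩ := Multiset.card_eq_three.mp hVc
  have hab : a ≠ b := by intro h; subst h; simp at hU
  have hac : a ≠ c := by intro h; subst h; simp at hU
  have hbc : b ≠ c := by intro h; subst h; simp at hU
  have hxy : x ≠ y := by intro h; subst h; simp at hV
  have hxz : x ≠ z := by intro h; subst h; simp at hV
  have hyz : y ≠ z := by intro h; subst h; simp at hV
  -- the six weighted sums
  have hW : wProd ({a,b,c} : Multiset (ZMod p)) ({x,y,z} : Multiset (ZMod p)) =
      ({a*x+b*y+c*z, a*x+b*z+c*y, a*y+b*x+c*z, a*y+b*z+c*x, a*z+b*x+c*y, a*z+b*y+c*x} :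
        Set (ZMod p)) := by
    ext g
    constructor
    · rintro ⟨l1, l2, h1, h2, hg⟩
      have hl1 : l1.length = 3 := by
        have := congrArg Multiset.card h1
        simpa using this
      have hl2 : l2.length = 3 := by
        have := congrArg Multiset.card h2
        simpa using this
      obtain ⟨u, v, w, rfl⟩ := List.length_eq_three.mp hl1
      obtain ⟨u', v', w', rfl⟩ := List.length_eq_three.mp hl2
      subst hg
      rcases perm3 (show ({u,v,w} : Multiset (ZMod p)) = {a,b,c} from h1) with
        ⟨rfl, rfl, rfl⟩ | ⟨rfl, rfl, rfl⟩ | ⟨rfl, rfl, rfl⟩ |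
        ⟨rfl, rfl, rfl⟩ | ⟨rfl, rfl, rfl⟩ | ⟨rfl, rfl, rfl⟩ <;>
      rcases perm3 (show ({u',v',w'} : Multiset (ZMod p)) = {x,y,z} from h2) with
        ⟨rfl, rfl, rfl⟩ | ⟨rfl, rfl, rfl⟩ | ⟨rfl, rfl, rfl⟩ |
        ⟨rfl, rfl, rfl⟩ | ⟨rfl, rfl, rfl⟩ | ⟨rfl, rfl, rfl⟩ <;>
      simp only [List.zipWith, List.sum_cons, List.sum_nil, Set.mem_insert_iff,
        Set.mem_singleton_iff] <;>
      first
        | (left; ring1)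
        | (right; left; ring1)
        | (right; right; left; ring1)
        | (right; right; right; left; ring1)
        | (right; right; right; right; left; ring1)
        | (right; right; right; right; right; ring1)
    · intro hg
      simp only [Set.mem_insert_iff, Set.mem_singleton_iff] at hg
      rcases hg with rfl | rfl | rfl | rfl | rfl | rfl
      · exact ⟨[a,b,c], [x,y,z], coe3_xyz a b c, coe3_xyz x y z, by simp only [List.zipWith, List.sum_cons, List.sum_nil]; ring⟩
      · exact ⟨[a,b,c], [x,z,y], coe3_xyz a b c, coe3_xzy x y z, by simp only [List.zipWith, List.sum_cons, List.sum_nil]; ring⟩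
      · exact ⟨[a,b,c], [y,x,z], coe3_xyz a b c, coe3_yxz x y z, by simp only [List.zipWith, List.sum_cons, List.sum_nil]; ring⟩
      · exact ⟨[a,b,c], [y,z,x], coe3_xyz a b c, coe3_yzx x y z, by simp only [List.zipWith, List.sum_cons, List.sum_nil]; ring⟩
      · exact ⟨[a,b,c], [z,x,y], coe3_xyz a b c, coe3_zxy x y z, by simp only [List.zipWith, List.sum_cons, List.sum_nil]; ring⟩
      · exact ⟨[a,b,c], [z,y,x], coe3_xyz a b c, coe3_zyx x y z, by simp only [List.zipWith, List.sum_cons, List.sum_nil]; ring⟩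
  obtain ⟨d, hd, a0, hS⟩ := hAP
  rw [hcard] at hS
  have hp11 : 10 < p := by
    by_contra h
    push_neg at h
    interval_cases p <;> norm_num at hp
  have hinj : ∀ m n : ℕ, m < 10 → n < 10 → ((m : ZMod p) = (n : ZMod p)) → m = n := by
    intro m n hm hn h
    have := (ZMod.natCast_eq_natCast_iff m n p).mp h
    rwa [Nat.ModEq, Nat.mod_eq_of_lt (by omega), Nat.mod_eq_of_lt (by omega)] at this
  have hmem : ∀ g ∈ wProd ({a,b,c} : Multiset (ZMod p)) ({x,y,z} : Multiset (ZMod p)),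
      ∃ n : ℕ, n < 4 ∧ g = a0 + (n : ZMod p) * d := by
    intro g hgm
    rw [hS] at hgm
    obtain ⟨i, hi, hgi⟩ := hgm
    exact ⟨i, by simpa using hi, hgi.symm⟩
  obtain ⟨n1, hn1lt, hn1⟩ := hmem (a*x+b*y+c*z) (by rw [hW]; simp)
  obtain ⟨n2, hn2lt, hn2⟩ := hmem (a*x+b*z+c*y) (by rw [hW]; simp)
  obtain ⟨n3, hn3lt, hn3⟩ := hmem (a*y+b*x+c*z) (by rw [hW]; simp)
  obtain ⟨n4, hn4lt, hn4⟩ := hmem (a*y+b*z+c*x) (by rw [hW]; simp)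
  obtain ⟨n5, hn5lt, hn5⟩ := hmem (a*z+b*x+c*y) (by rw [hW]; simp)
  obtain ⟨n6, hn6lt, hn6⟩ := hmem (a*z+b*y+c*x) (by rw [hW]; simp)
  -- the linear relation
  have hlin : n1 + n4 + n5 = n2 + n3 + n6 := by
    apply hinj _ _ (by omega) (by omega)
    refine mul_right_cancel₀ hd ?_
    push_cast
    linear_combination hn2 + hn3 + hn6 - hn1 - hn4 - hn5
  -- nonvanishing differences
  have hfac : ∀ {s t : ZMod p}, s ≠ 0 → t ≠ 0 → s * t ≠ 0 := fun hs ht => mul_ne_zero hs ht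
  have Dab : (a - b : ZMod p) ≠ 0 := sub_ne_zero.mpr hab
  have Dac : (a - c : ZMod p) ≠ 0 := sub_ne_zero.mpr hac
  have Dbc : (b - c : ZMod p) ≠ 0 := sub_ne_zero.mpr hbc
  have Dxy : (x - y : ZMod p) ≠ 0 := sub_ne_zero.mpr hxy
  have Dxz : (x - z : ZMod p) ≠ 0 := sub_ne_zero.mpr hxz
  have Dyz : (y - z : ZMod p) ≠ 0 := sub_ne_zero.mpr hyz
  have hne : ∀ m n : ℕ, m < 4 → n < 4 → (m : ZMod p) ≠ (n : ZMod p) → m ≠ n := by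
    intro m n _ _ h hmn; exact h (by rw [hmn])
  have hdiff : ∀ m n : ℕ, ∀ s t : ZMod p,
      s = a0 + (m : ZMod p) * d → t = a0 + (n : ZMod p) * d → s - t ≠ 0 → m ≠ n := by
    intro m n s t hsm htn hst hmn
    apply hst
    rw [hsm, htn, hmn]
    ring
  have h12 : n1 ≠ n2 :=
    hdiff n1 n2 _ _ hn1 hn2 (fun h => hfac Dbc Dyz (by linear_combination h))
  have h13 : n1 ≠ n3 :=
    hdiff n1 n3 _ _ hn1 hn3 (fun h => hfac Dab Dxy (by linear_combination h))
  have h16 : n1 ≠ n6 :=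
    hdiff n1 n6 _ _ hn1 hn6 (fun h => hfac Dac Dxz (by linear_combination h))
  have h24 : n2 ≠ n4 :=
    hdiff n2 n4 _ _ hn2 hn4 (fun h => hfac Dac Dxy (by linear_combination h))
  have h25 : n2 ≠ n5 :=
    hdiff n2 n5 _ _ hn2 hn5 (fun h => hfac Dab Dxz (by linear_combination h))
  have h34 : n3 ≠ n4 :=
    hdiff n3 n4 _ _ hn3 hn4 (fun h => hfac Dbc Dxz (by linear_combination h))
  have h35 : n3 ≠ n5 :=
    hdiff n3 n5 _ _ hn3 hn5 (fun h => hfac Dac Dyz (by linear_combination h))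
  have h46 : n4 ≠ n6 :=
    hdiff n4 n6 _ _ hn4 hn6 (fun h => hfac Dab Dyz (by linear_combination h))
  have h56 : n5 ≠ n6 :=
    hdiff n5 n6 _ _ hn5 hn6 (fun h => hfac Dbc Dxy (by linear_combination h))
  -- surjectivity
  have hk' : ∀ k m : ℕ, k < 4 → m < 4 → a0 + (k : ZMod p) * d = a0 + (m : ZMod p) * d →
      k = m := by
    intro k m hk hm h
    apply hinj k m (by omega) (by omega)
    exact mul_right_cancel₀ hd (by linear_combination h)
  have hcov : ∀ k : ℕ, k < 4 → (k = n1 ∨ k = n2 ∨ k = n3 ∨ k = n4 ∨ k = n5 ∨ k = n6) := by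
    intro k hk
    have hkmem : a0 + (k : ZMod p) * d ∈ wProd ({a,b,c} : Multiset (ZMod p))
        ({x,y,z} : Multiset (ZMod p)) := by
      rw [hS]
      exact ⟨k, by simpa using hk, rfl⟩
    rw [hW] at hkmem
    simp only [Set.mem_insert_iff, Set.mem_singleton_iff] at hkmem
    rcases hkmem with h | h | h | h | h | h
    · exact Or.inl (hk' k n1 hk hn1lt (h.trans hn1))
    · exact Or.inr (Or.inl (hk' k n2 hk hn2lt (h.trans hn2)))
    · exact Or.inr (Or.inr (Or.inl (hk' k n3 hk hn3lt (h.trans hn3))))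
    · exact Or.inr (Or.inr (Or.inr (Or.inl (hk' k n4 hk hn4lt (h.trans hn4)))))
    · exact Or.inr (Or.inr (Or.inr (Or.inr (Or.inl (hk' k n5 hk hn5lt (h.trans hn5))))))
    · exact Or.inr (Or.inr (Or.inr (Or.inr (Or.inr (hk' k n6 hk hn6lt (h.trans hn6))))))
  refine key ⟨n1, hn1lt⟩ ⟨n2, hn2lt⟩ ⟨n3, hn3lt⟩ ⟨n4, hn4lt⟩ ⟨n5, hn5lt⟩ ⟨n6, hn6lt⟩
    hlin ?_ ?_ ?_ ?_ ?_ ?_ ?_ ?_ ?_ ?_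
  · exact fun h => h12 (congrArg Fin.val h)
  · exact fun h => h13 (congrArg Fin.val h)
  · exact fun h => h16 (congrArg Fin.val h)
  · exact fun h => h24 (congrArg Fin.val h)
  · exact fun h => h25 (congrArg Fin.val h)
  · exact fun h => h34 (congrArg Fin.val h)
  · exact fun h => h35 (congrArg Fin.val h)
  · exact fun h => h46 (congrArg Fin.val h)
  · exact fun h => h56 (congrArg Fin.val h)
  · intro k
    rcases hcov k.val k.isLt with h | h | h | h | h | h
    · exact Or.inl (Fin.ext h)
    · exact Or.inr (Or.inl (Fin.ext h))
    · exact Or.inr (Or.inr (Or.inl (Fin.ext h)))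
    · exact Or.inr (Or.inr (Or.inr (Or.inl (Fin.ext h))))
    · exact Or.inr (Or.inr (Or.inr (Or.inr (Or.inl (Fin.ext h)))))
    · exact Or.inr (Or.inr (Or.inr (Or.inr (Or.inr (Fin.ext h)))))
end

section
/- Let p > 7 be a prime and let G = Z/pZ. If U and V are square-free sequences over G with |U| = |V| = 3 and |U·V| = 4, then either U and V are both arithmetic progressions in G, or there exist affine bijections f(z) = αz + β and g(z) = γz + δ of G (with α, γ ≠ 0) and elements x, y ∈ G with x ≠ y, x² − x + 1 = 0 and y² − y + 1 = 0, such that f(U) = {0, 1, x} and g(V) = {0, 1, y}. -/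
/-- A three-term sequence is an arithmetic progression:
it equals `{a, a + d, a + 2d}` for some `a` and some `d ≠ 0`. -/
def MulIsAP3 {p : ℕ} (U : Multiset (ZMod p)) : Prop :=
  ∃ a d : ZMod p, d ≠ 0 ∧ U = {a, a + d, a + 2 * d}

/-!
Affine maps normalize `U = α • {0, 1, u} + β` and `V = γ • {0, 1, v} + δ` with `u, v ∉ {0, 1}`;
then `U · V` is an affine image of `{0, 1, u} · {0, 1, v} = {1, u + v, u v} ∪ {u, v, 1 + u v}`.
No element of the first triple equals one of the second, so four values leave two cases:
one triple collapses to a point, which forces `u² - u + 1 = 0 = v² - v + 1`, or each triple has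
one coincidence, which forces `u, v ∈ {2, -1, 1/2}`, i.e. `{0, 1, u}` and `{0, 1, v}` are
arithmetic progressions.
-/
theorem Multiset.coe_eq_triple_iff {α : Type*} {l : List α} {a b c : α} :
    (l : Multiset α) = {a, b, c} ↔
      l = [a, b, c] ∨ l = [b, a, c] ∨ l = [c, b, a] ∨ l = [b, c, a] ∨ l = [c, a, b] ∨
        l = [a, c, b] := by
  rw [show ({a, b, c} : Multiset α) = ↑[a, b, c] from rfl, Multiset.coe_eq_coe,
    ← List.mem_permutations]
  simp [List.permutations]

theorem Set.ncard_triple_le_three {α : Type*} (x y z : α) : ({x, y, z} : Set α).ncard ≤ 3 :=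
  (Set.ncard_insert_le _ _).trans <| Nat.succ_le_succ <|
    (Set.ncard_insert_le _ _).trans (by rw [Set.ncard_singleton])

theorem Set.eq_or_eq_or_eq_of_ncard_triple_lt_three {α : Type*} {x y z : α}
    (h : ({x, y, z} : Set α).ncard < 3) : x = y ∨ x = z ∨ y = z := by
  by_contra! hne
  exact h.ne (Set.ncard_eq_three.2 ⟨x, y, z, hne.1, hne.2.1, hne.2.2, rfl⟩)

theorem Set.eq_and_eq_of_ncard_triple_le_one {α : Type*} {x y z : α}
    (h : ({x, y, z} : Set α).ncard ≤ 1) : x = y ∧ x = z := by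
  rw [Set.ncard_le_one_iff] at h
  exact ⟨h (by simp) (by simp), h (by simp) (by simp)⟩

section WeightedProduct

variable {R : Type*} [CommRing R]

theorem wProd_triple (a b c d e f : R) :
    wProd {a, b, c} {d, e, f} =
      {a*d + b*e + c*f, a*d + b*f + c*e, a*e + b*d + c*f, a*e + b*f + c*d, a*f + b*d + c*e,
        a*f + b*e + c*d} := by
  ext z
  simp only [wProd, Set.mem_ofPred_eq, Multiset.coe_eq_triple_iff]
  constructor
  · rintro ⟨l1, l2, h1, h2, rfl⟩
    rcases h1 with rfl | rfl | rfl | rfl | rfl | rfl <;>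
      rcases h2 with rfl | rfl | rfl | rfl | rfl | rfl <;>
      · simp only [List.zipWith_cons_cons, List.zipWith_nil_left, List.sum_cons, List.sum_nil,
          Set.mem_insert_iff, Set.mem_singleton_iff]
        ring_nf
        tauto
  · rintro (rfl | rfl | rfl | rfl | rfl | rfl)
    exacts [⟨[a, b, c], [d, e, f], by simp, by simp, by simp [add_assoc]⟩,
      ⟨[a, b, c], [d, f, e], by simp, by simp, by simp [add_assoc]⟩,
      ⟨[a, b, c], [e, d, f], by simp, by simp, by simp [add_assoc]⟩,
      ⟨[a, b, c], [e, f, d], by simp, by simp, by simp [add_assoc]⟩,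
      ⟨[a, b, c], [f, d, e], by simp, by simp, by simp [add_assoc]⟩,
      ⟨[a, b, c], [f, e, d], by simp, by simp, by simp [add_assoc]⟩]

theorem wProd_map_affine_triple (α β γ δ a b c d e f : R) :
    wProd (({a, b, c} : Multiset R).map (α * · + β)) (({d, e, f} : Multiset R).map (γ * · + δ)) =
      (fun z => α * γ * z + (α * δ * (a + b + c) + β * γ * (d + e + f) + 3 * β * δ)) ''
        wProd {a, b, c} {d, e, f} := by
  simp only [Multiset.insert_eq_cons, Multiset.map_cons, Multiset.map_singleton]
  simp only [← Multiset.insert_eq_cons, wProd_triple, Set.image_insert_eq, Set.image_singleton]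
  ring_nf

theorem wProd_zero_one (u v : R) :
    wProd {0, 1, u} {0, 1, v} = {1 + u * v, v + u, u * v, v, u, 1} := by
  rw [wProd_triple]
  simp

end WeightedProduct

section Field

variable {F : Type*} [Field F]

theorem Multiset.exists_eq_map_affine_zero_one {U : Multiset F} (hU : U.Nodup)
    (hUc : Multiset.card U = 3) :
    ∃ α β u : F, α ≠ 0 ∧ u ≠ 0 ∧ u ≠ 1 ∧ U = ({0, 1, u} : Multiset F).map (α * · + β) := by
  obtain ⟨a, b, c, rfl⟩ := Multiset.card_eq_three.mp hUc
  simp only [Multiset.insert_eq_cons, Multiset.nodup_cons, Multiset.mem_cons,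
    Multiset.mem_singleton, Multiset.nodup_singleton, and_true, not_or] at hU
  obtain ⟨⟨hab, hac⟩, hbc⟩ := hU
  have hba : b - a ≠ 0 := sub_ne_zero.mpr (Ne.symm hab)
  refine ⟨b - a, a, (c - a) / (b - a), hba, ?_, ?_, ?_⟩
  · exact div_ne_zero (sub_ne_zero.mpr (Ne.symm hac)) hba
  · rw [Ne, div_eq_one_iff_eq hba, sub_left_inj]
    exact Ne.symm hbc
  · simp [mul_div_cancel₀ _ hba]

theorem Multiset.map_affine_inv_map_affine {α : F} (β : F) (hα : α ≠ 0) (S : Multiset F) :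
    (S.map (α * · + β)).map (α⁻¹ * · + -(α⁻¹ * β)) = S := by
  rw [Multiset.map_map]
  conv_rhs => rw [← Multiset.map_id S]
  congr 1
  funext z
  rw [Function.comp_apply, mul_add, inv_mul_cancel_left₀ hα, add_neg_cancel_right, id]

theorem Multiset.map_affine_zero_one_eq_reflect (γ δ v : F) :
    ({0, 1, v} : Multiset F).map (γ * · + δ) =
      ({0, 1, 1 - v} : Multiset F).map (-γ * · + (γ + δ)) := by
  simp only [Multiset.insert_eq_cons, Multiset.map_cons, Multiset.map_singleton]
  rw [Multiset.cons_swap]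
  ring_nf

theorem ap_or_sq_sub_add_one_of_ncard_wProd_zero_one_eq_four {u v : F}
    (hu0 : u ≠ 0) (hu1 : u ≠ 1) (hv0 : v ≠ 0) (hv1 : v ≠ 1)
    (h : (wProd {0, 1, u} {0, 1, v}).ncard = 4) :
    ((u = 2 ∨ u = -1 ∨ 2 * u = 1) ∧ (v = 2 ∨ v = -1 ∨ 2 * v = 1)) ∨
      (u ^ 2 - u + 1 = 0 ∧ v ^ 2 - v + 1 = 0) := by
  have hsplit : wProd {0, 1, u} {0, 1, v} = {1, v + u, u * v} ∪ {u, v, 1 + u * v} := by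
    rw [wProd_zero_one]
    ext
    simp only [Set.mem_union, Set.mem_insert_iff, Set.mem_singleton_iff]
    tauto
  have hdisj : Disjoint ({1, v + u, u * v} : Set F) {u, v, 1 + u * v} := by
    simp only [Set.disjoint_insert_left, Set.disjoint_singleton_left, Set.mem_insert_iff,
      Set.mem_singleton_iff]
    grind
  rw [hsplit, Set.ncard_union_eq hdisj] at h
  have h₁ := Set.ncard_triple_le_three (1 : F) (v + u) (u * v)
  have h₂ := Set.ncard_triple_le_three u v (1 + u * v)
  rcases le_or_gt ({1, v + u, u * v} : Set F).ncard 1 with hle₁ | hgt₁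
  · obtain ⟨hA, hB⟩ := Set.eq_and_eq_of_ncard_triple_le_one hle₁
    right
    constructor <;> grind
  rcases le_or_gt ({u, v, 1 + u * v} : Set F).ncard 1 with hle₂ | hgt₂
  · obtain ⟨hA, hB⟩ := Set.eq_and_eq_of_ncard_triple_le_one hle₂
    right
    constructor <;> grind
  have hlt₁ : ({1, v + u, u * v} : Set F).ncard < 3 := by omega
  have hlt₂ : ({u, v, 1 + u * v} : Set F).ncard < 3 := by omega
  left
  rcases Set.eq_or_eq_or_eq_of_ncard_triple_lt_three hlt₁ with h1 | h1 | h1 <;>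
    rcases Set.eq_or_eq_or_eq_of_ncard_triple_lt_three hlt₂ with h2 | h2 | h2 <;>
    grind

theorem exists_root_ne_and_map_affine_zero_one_eq (h3 : (3 : F) ≠ 0) (u : F) {γ : F} (δ : F)
    {v : F} (hγ : γ ≠ 0) (hv : v ^ 2 - v + 1 = 0) :
    ∃ y γ' δ' : F, γ' ≠ 0 ∧ u ≠ y ∧ y ^ 2 - y + 1 = 0 ∧
      ({0, 1, v} : Multiset F).map (γ * · + δ) = ({0, 1, y} : Multiset F).map (γ' * · + δ') := by
  by_cases huv : u = v
  · subst huv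
    -- the two roots of `x ^ 2 - x + 1` are `u` and `1 - u`, distinct when `3 ≠ 0`
    refine ⟨1 - u, -γ, γ + δ, neg_ne_zero.2 hγ, fun h => h3 ?_, by linear_combination hv,
      Multiset.map_affine_zero_one_eq_reflect γ δ u⟩
    linear_combination 4 * hv - (2 * u - 1) * h
  · exact ⟨v, γ, δ, hγ, huv, hv, rfl⟩

end Field

theorem mulIsAP3_map_affine_zero_one {p : ℕ} [Fact p.Prime] {α : ZMod p} (β : ZMod p)
    {u : ZMod p} (hα : α ≠ 0) (hu : u = 2 ∨ u = -1 ∨ 2 * u = 1) :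
    MulIsAP3 (({0, 1, u} : Multiset (ZMod p)).map (α * · + β)) := by
  simp only [Multiset.insert_eq_cons, Multiset.map_cons, Multiset.map_singleton]
  rcases hu with rfl | rfl | h2u
  · exact ⟨β, α, hα, by ring_nf; rfl⟩
  · refine ⟨β - α, α, hα, Multiset.coe_eq_triple_iff.2 (.inr <| .inr <| .inr <| .inl ?_)⟩
    simp only [List.cons.injEq, and_true]
    exact ⟨by ring, by ring, by ring⟩
  · refine ⟨β, α * u, mul_ne_zero hα (by rintro rfl; simp at h2u),
      Multiset.coe_eq_triple_iff.2 (.inr <| .inr <| .inr <| .inr <| .inr ?_)⟩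
    simp only [List.cons.injEq, and_true]
    exact ⟨by ring, by linear_combination -α * h2u, by ring⟩

theorem stmt3 (p : ℕ) (hp : p.Prime) (hp7 : 7 < p)
    (U V : Multiset (ZMod p)) (hU : U.Nodup) (hV : V.Nodup)
    (hUc : Multiset.card U = 3) (hVc : Multiset.card V = 3)
    (hcard : (wProd U V).ncard = 4) :
    (MulIsAP3 U ∧ MulIsAP3 V) ∨
    (∃ α β γ δ x y : ZMod p, α ≠ 0 ∧ γ ≠ 0 ∧ x ≠ y ∧
      x ^ 2 - x + 1 = 0 ∧ y ^ 2 - y + 1 = 0 ∧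
      U.map (fun z => α * z + β) = {0, 1, x} ∧
      V.map (fun z => γ * z + δ) = {0, 1, y}) := by
  have : Fact p.Prime := ⟨hp⟩
  obtain ⟨α, β, u, hα, hu0, hu1, rfl⟩ := Multiset.exists_eq_map_affine_zero_one hU hUc
  obtain ⟨γ, δ, v, hγ, hv0, hv1, rfl⟩ := Multiset.exists_eq_map_affine_zero_one hV hVc
  rw [wProd_map_affine_triple, Set.ncard_image_of_injective _
    fun z w h => mul_left_cancel₀ (mul_ne_zero hα hγ) (add_right_cancel h)] at hcard
  rcases ap_or_sq_sub_add_one_of_ncard_wProd_zero_one_eq_four hu0 hu1 hv0 hv1 hcard with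
    ⟨hu, hv⟩ | ⟨hu, hv⟩
  · exact .inl ⟨mulIsAP3_map_affine_zero_one β hα hu, mulIsAP3_map_affine_zero_one δ hγ hv⟩
  right
  have h3 : (3 : ZMod p) ≠ 0 := by
    have : ((3 : ℕ) : ZMod p) ≠ 0 := by
      rw [Ne, ZMod.natCast_eq_zero_iff]
      exact fun h => absurd (Nat.le_of_dvd three_pos h) (by omega)
    exact_mod_cast this
  obtain ⟨y, γ', δ', hγ', huy, hy, hV⟩ := exists_root_ne_and_map_affine_zero_one_eq h3 u δ hγ hv
  rw [hV]
  exact ⟨α⁻¹, -(α⁻¹ * β), γ'⁻¹, -(γ'⁻¹ * δ'), u, y, inv_ne_zero hα, inv_ne_zero hγ', huy, hu, hy,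
    Multiset.map_affine_inv_map_affine β hα _, Multiset.map_affine_inv_map_affine δ' hγ' _⟩
end

section
/- Let p be a prime and let A, B ⊆ Z/pZ with |A|, |B| ≥ 2. If |A + B| = |A| + |B| − 1 < p and B is an arithmetic progression with difference d, then A and A + B are also arithmetic progressions with difference d. -/
/-!
Write `B = {0, d} + P` with `P` an arithmetic progression of difference `d` and length `|B| - 1`.
Cauchy–Davenport applied to `(A + {0, d}) + P` gives `|A ∪ (A + d)| ≤ |A| + 1`, so at most one
`e ∈ A` has `e + d ∉ A`. Since `|A| < p`, walking from any `x ∈ A` in steps of `d` must leave `A`,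
and it can only do so at `e`, after fewer than `|A|` steps. Hence `A ⊆ {e - i d : i < |A|}`, and
comparing cardinalities `A` is that progression; `A + B` is then a sum of two progressions of
difference `d`.
-/

open scoped Pointwise

/-- `A` is an arithmetic progression in `ZMod p` with difference `d`:
`A = {a, a + d, …, a + (|A| - 1) d}` for some `a`, where `d ≠ 0`. -/
def IsAPWith {p : ℕ} (A : Finset (ZMod p)) (d : ZMod p) : Prop :=
  d ≠ 0 ∧ ∃ a : ZMod p, A = (Finset.range A.card).image fun i : ℕ => a + (i : ZMod p) * d

open Finset

namespace ZMod

variable {p : ℕ}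

def arithProg (a d : ZMod p) (n : ℕ) : Finset (ZMod p) :=
  (range n).image fun i : ℕ => a + (i : ZMod p) * d

lemma mem_arithProg {a d x : ZMod p} {n : ℕ} :
    x ∈ arithProg a d n ↔ ∃ i < n, a + (i : ZMod p) * d = x := by
  simp [arithProg]

lemma card_arithProg [Fact p.Prime] (a : ZMod p) {d : ZMod p} (hd : d ≠ 0) {n : ℕ}
    (hn : n ≤ p) : #(arithProg a d n) = n := by
  rw [arithProg, card_image_of_injOn, card_range]
  intro i hi j hj hij
  replace hij : (i : ZMod p) = j := mul_right_cancel₀ hd (add_left_cancel hij)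
  rwa [natCast_eq_natCast_iff', Nat.mod_eq_of_lt ((mem_range.1 hi).trans_le hn),
    Nat.mod_eq_of_lt ((mem_range.1 hj).trans_le hn)] at hij

lemma arithProg_add_arithProg (a b d : ZMod p) {m n : ℕ} (hm : 1 ≤ m) (hn : 1 ≤ n) :
    arithProg a d m + arithProg b d n = arithProg (a + b) d (m + n - 1) := by
  ext x
  simp only [mem_add, mem_arithProg]
  constructor
  · rintro ⟨_, ⟨i, hi, rfl⟩, _, ⟨j, hj, rfl⟩, rfl⟩
    exact ⟨i + j, by omega, by push_cast; ring⟩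
  · rintro ⟨k, hk, rfl⟩
    refine ⟨_, ⟨min k (m - 1), by omega, rfl⟩, _, ⟨k - min k (m - 1), by omega, rfl⟩, ?_⟩
    rw [Nat.cast_sub (min_le_left _ _)]
    ring

lemma add_arithProg_two (A : Finset (ZMod p)) (d : ZMod p) :
    A + arithProg 0 d 2 = A ∪ A.image (· + d) := by
  have hpair : arithProg 0 d 2 = {0, d} := by simp [arithProg, range_add_one, pair_comm]
  ext x
  simp only [hpair, mem_add, mem_insert, mem_singleton, mem_union, mem_image]
  aesop

variable [Fact p.Prime] {A : Finset (ZMod p)} {d : ZMod p}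

lemma exists_add_notMem (hA : #A < p) (hd : d ≠ 0) (x : ZMod p) :
    ∃ j < p, x + (j : ZMod p) * d ∉ A := by
  obtain ⟨c, -, hc⟩ := exists_mem_notMem_of_card_lt_card (s := A) (t := univ)
    (by rwa [card_univ, card])
  refine ⟨((c - x) / d).val, val_lt _, ?_⟩
  rwa [natCast_zmod_val, div_mul_cancel₀ _ hd, add_sub_cancel]

lemma exists_lt_card_add_mem_add_notMem (hA : #A < p) (hd : d ≠ 0) {x : ZMod p} (hx : x ∈ A) :
    ∃ i < #A, x + (i : ZMod p) * d ∈ A ∧ x + (i : ZMod p) * d + d ∉ A := by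
  classical
  have hex := exists_add_notMem hA hd x
  obtain ⟨j, ⟨hjp, hjA⟩, hmin⟩ : ∃ j, (j < p ∧ x + (j : ZMod p) * d ∉ A) ∧
      ∀ i < j, ¬(i < p ∧ x + (i : ZMod p) * d ∉ A) :=
    ⟨_, Nat.find_spec hex, fun _ => Nat.find_min hex⟩
  have hmem : ∀ i < j, x + (i : ZMod p) * d ∈ A := fun i hi => by
    simpa [hjp.trans' hi] using hmin i hi
  obtain ⟨i, rfl⟩ : ∃ i, j = i + 1 :=
    Nat.exists_eq_succ_of_ne_zero fun h => hjA (by simpa [h] using hx)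
  have hsub : arithProg x d (i + 1) ⊆ A := fun y hy => by
    obtain ⟨k, hk, rfl⟩ := mem_arithProg.1 hy
    exact hmem k hk
  have hcard : i + 1 ≤ #A := card_arithProg x hd hjp.le ▸ card_le_card hsub
  refine ⟨i, by omega, hmem i (by omega), ?_⟩
  rwa [Nat.cast_succ, add_one_mul, ← add_assoc] at hjA

lemma eq_of_card_union_le_of_add_notMem (hunion : #(A ∪ A.image (· + d)) ≤ #A + 1)
    {x y : ZMod p} (hx : x ∈ A) (hy : y ∈ A) (hxd : x + d ∉ A) (hyd : y + d ∉ A) : x = y := by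
  classical
  have hle : #(A.image (· + d) \ A) ≤ 1 := by
    have := card_sdiff_add_card (A.image (· + d)) A
    rw [union_comm] at this
    omega
  have := card_le_one.1 hle (x + d) (by simp [hx, hxd]) (y + d) (by simp [hy, hyd])
  exact add_right_cancel this

theorem exists_eq_arithProg_of_card_union_le (hA : A.Nonempty) (hAp : #A < p) (hd : d ≠ 0)
    (hunion : #(A ∪ A.image (· + d)) ≤ #A + 1) : ∃ a, A = arithProg a d #A := by
  obtain ⟨e, he, hed⟩ : ∃ e ∈ A, e + d ∉ A :=
    let ⟨_, hx₀⟩ := hA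
    let ⟨_, _, he, hed⟩ := exists_lt_card_add_mem_add_notMem hAp hd hx₀
    ⟨_, he, hed⟩
  refine ⟨e - ((#A - 1 : ℕ) : ZMod p) * d,
    eq_of_subset_of_card_le (fun x hx => ?_) (card_arithProg _ hd hAp.le).le⟩
  obtain ⟨i, hi, hxi, hxid⟩ := exists_lt_card_add_mem_add_notMem hAp hd hx
  have hexit := eq_of_card_union_le_of_add_notMem hunion hxi he hxid hed
  refine mem_arithProg.2 ⟨#A - 1 - i, by omega, ?_⟩
  rw [Nat.cast_sub (by omega : i ≤ #A - 1)]
  linear_combination -hexit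

end ZMod

open ZMod

theorem stmt4 (p : ℕ) (hp : p.Prime) (A B : Finset (ZMod p))
    (hA : 2 ≤ A.card) (hB : 2 ≤ B.card) (d : ZMod p)
    (hsum : (A + B).card = A.card + B.card - 1)
    (hlt : A.card + B.card - 1 < p)
    (hAP : IsAPWith B d) :
    IsAPWith A d ∧ IsAPWith (A + B) d := by
  have := Fact.mk hp
  obtain ⟨hd, b, hBeq⟩ := hAP
  have hsplit : arithProg 0 d 2 + arithProg b d (#B - 1) = B := by
    rw [arithProg_add_arithProg _ _ _ (by norm_num) (by omega), zero_add,
      show 2 + (#B - 1) - 1 = #B by omega]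
    exact hBeq.symm
  have hunion : #(A ∪ A.image (· + d)) ≤ #A + 1 := by
    have hcd := cauchy_davenport hp (s := A + arithProg 0 d 2) (t := arithProg b d (#B - 1))
      ((card_pos.1 (by omega)).add (card_pos.1 (by rw [card_arithProg 0 hd (by omega)]; omega)))
      (card_pos.1 (by rw [card_arithProg b hd (by omega)]; omega))
    rw [add_assoc, hsplit, hsum, card_arithProg b hd (by omega), add_arithProg_two] at hcd
    omega
  obtain ⟨a, hA'⟩ :=
    exists_eq_arithProg_of_card_union_le (card_pos.1 (by omega)) (by omega) hd hunion
  refine ⟨⟨hd, a, hA'⟩, hd, a + b, ?_⟩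
  change A + B = arithProg (a + b) d #(A + B)
  rw [hsum, ← arithProg_add_arithProg a b d (by omega) (by omega)]
  exact congrArg₂ (· + ·) hA' hBeq
end

section
/- Let p be a prime and let A, B ⊆ Z/pZ be nonempty with |B| ≥ 3. If |A + B| ≤ |A| + |B| < p and B is an arithmetic progression with difference d, then A + B is also an arithmetic progression with difference d. -/
open scoped Pointwise

/-!
Write `B = {b, b + d, …, b + m d}` and `Tⱼ = A + {b, …, b + j d}`, so that `Tⱼ₊₁ = Tⱼ ∪ (Tⱼ + d)`.
Each step enlarges `Tⱼ` by the number of its left ends (the `x ∈ Tⱼ` with `x - d ∉ Tⱼ`), and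
this number can only decrease with `j`. Hence `|A + B| ≥ |A| + m e`, where `e` is
the number of left ends of `A + B`. In `ℤ/pℤ` a nonempty proper subset has at least one left
end, and `|A + B| ≤ |A| + m + 1` with `m ≥ 2` forces `e = 1`: `A + B` is a single progression.
-/

open Finset

section LeftEnds

variable {G : Type*} [AddCommGroup G] [DecidableEq G]

def leftEnds (d : G) (S : Finset G) : Finset G := S \ S.image (· + d)

variable {d : G}

lemma mem_leftEnds {S : Finset G} {x : G} : x ∈ leftEnds d S ↔ x ∈ S ∧ x - d ∉ S := by
  simp [leftEnds, sub_eq_add_neg]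

lemma card_union_image_add (S : Finset G) :
    (S ∪ S.image (· + d)).card = S.card + (leftEnds d S).card := by
  rw [← card_sdiff_add_card, card_image_of_injective _ (add_left_injective d), leftEnds, add_comm]

lemma leftEnds_union_image_add_subset (S : Finset G) :
    leftEnds d (S ∪ S.image (· + d)) ⊆ leftEnds d S := by
  intro x
  simp only [mem_leftEnds, mem_union, mem_image, not_or, not_exists, not_and]
  rintro ⟨hx | ⟨y, hy, rfl⟩, hxS, -⟩
  · exact ⟨hx, hxS⟩
  · exact absurd (by simpa using hy) hxS

lemma add_image_range_succ_nsmul (S : Finset G) (n : ℕ) :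
    S + (range (n + 2)).image (· • d) =
      S + (range (n + 1)).image (· • d) ∪ (S + (range (n + 1)).image (· • d)).image (· + d) := by
  ext x
  simp only [mem_add, mem_union, mem_image, mem_range]
  constructor
  · rintro ⟨s, hs, _, ⟨i, hi, rfl⟩, rfl⟩
    rcases Nat.lt_succ_iff_lt_or_eq.mp hi with hi | rfl
    · exact Or.inl ⟨s, hs, _, ⟨i, hi, rfl⟩, rfl⟩
    · exact Or.inr ⟨_, ⟨s, hs, _, ⟨n, n.lt_succ_self, rfl⟩, rfl⟩, by rw [succ_nsmul, add_assoc]⟩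
  · rintro (⟨s, hs, _, ⟨i, hi, rfl⟩, rfl⟩ | ⟨_, ⟨s, hs, _, ⟨i, hi, rfl⟩, rfl⟩, rfl⟩)
    · exact ⟨s, hs, _, ⟨i, by omega, rfl⟩, rfl⟩
    · exact ⟨s, hs, _, ⟨i + 1, by omega, rfl⟩, by rw [succ_nsmul, add_assoc]⟩

variable (d) in
lemma card_add_mul_card_leftEnds_le (S : Finset G) (n : ℕ) :
    S.card + n * (leftEnds d (S + (range (n + 1)).image (· • d))).card ≤
      (S + (range (n + 1)).image (· • d)).card := by
  induction n with
  | zero => simp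
  | succ n ih =>
    set T := S + (range (n + 1)).image (· • d)
    have hle := card_le_card (leftEnds_union_image_add_subset (d := d) T)
    rw [add_image_range_succ_nsmul, card_union_image_add]
    calc S.card + (n + 1) * (leftEnds d (T ∪ T.image (· + d))).card
        ≤ S.card + (n + 1) * (leftEnds d T).card := by gcongr
      _ ≤ T.card + (leftEnds d T).card := by linarith

end LeftEnds

namespace ZMod

variable {p : ℕ} [Fact p.Prime] {d : ZMod p}

lemma eq_univ_of_forall_sub_mem (hd : d ≠ 0) {S : Finset (ZMod p)} (hS : S.Nonempty)
    (h : ∀ x ∈ S, x - d ∈ S) : S = univ := by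
  obtain ⟨x, hx⟩ := hS
  have hxn : ∀ n : ℕ, x - n • d ∈ S := by
    intro n
    induction n with
    | zero => simpa using hx
    | succ n ih => rw [succ_nsmul, ← sub_sub]; exact h _ ih
  refine eq_univ_of_forall fun y => ?_
  simpa [nsmul_eq_mul, div_mul_cancel₀ _ hd] using hxn ((x - y) / d).val

lemma leftEnds_nonempty (hd : d ≠ 0) {S : Finset (ZMod p)} (hS : S.Nonempty)
    (hSp : S.card < p) : (leftEnds d S).Nonempty := by
  by_contra h
  have hSu := eq_univ_of_forall_sub_mem hd hS fun x hx => by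
    by_contra hxd
    exact h ⟨x, mem_leftEnds.mpr ⟨hx, hxd⟩⟩
  rw [hSu, card_univ, ZMod.card] at hSp
  exact hSp.false

lemma card_image_range_add_mul (hd : d ≠ 0) (a : ZMod p) {k : ℕ} (hk : k ≤ p) :
    ((range k).image fun i : ℕ => a + (i : ZMod p) * d).card = k := by
  rw [card_image_of_injOn, card_range]
  intro i hi j hj hij
  have := mul_right_cancel₀ hd (add_left_cancel hij)
  rw [ZMod.natCast_eq_natCast_iff'] at this
  simp only [coe_range, Set.mem_Iio] at hi hj
  rwa [Nat.mod_eq_of_lt (by omega), Nat.mod_eq_of_lt (by omega)] at this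

lemma image_range_subset_of_leftEnds_eq_singleton (hd : d ≠ 0) {S : Finset (ZMod p)}
    {a : ZMod p} (ha : leftEnds d S = {a}) {k : ℕ} (hk : k ≤ S.card) :
    (range k).image (fun i : ℕ => a + (i : ZMod p) * d) ⊆ S := by
  have haS : a ∈ S := (mem_leftEnds.mp (ha ▸ mem_singleton_self a)).1
  have hsub_mem : ∀ x ∈ S, x ≠ a → x - d ∈ S := fun x hx hxa => by
    by_contra hxd
    exact hxa (mem_singleton.mp (ha ▸ mem_leftEnds.mpr ⟨hx, hxd⟩))
  induction k with
  | zero => simp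
  | succ k ih =>
    set I := (range k).image fun i : ℕ => a + (i : ZMod p) * d
    have hIS : I ⊆ S := ih (by omega)
    rw [range_add_one, image_insert, insert_subset_iff]
    refine ⟨?_, hIS⟩
    by_contra hnext
    have hk0 : k ≠ 0 := by
      rintro rfl
      exact hnext (by simpa using haS)
    have haI : a ∈ I := mem_image.mpr ⟨0, mem_range.mpr (Nat.pos_of_ne_zero hk0), by simp⟩
    have hR : (S \ I).Nonempty := by
      rw [← card_pos, card_sdiff_of_subset hIS]
      have : I.card ≤ k := card_image_le.trans (card_range k).le
      omega
    -- `S \ I` would be closed under `x ↦ x - d`, yet it misses `a`.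
    have hRu := eq_univ_of_forall_sub_mem hd hR fun x hx => by
      obtain ⟨hxS, hxI⟩ := mem_sdiff.mp hx
      refine mem_sdiff.mpr ⟨hsub_mem x hxS (by rintro rfl; exact hxI haI), fun hxdI => ?_⟩
      obtain ⟨i, hi, hxi⟩ := mem_image.mp hxdI
      have hx_eq : x = a + ((i + 1 : ℕ) : ZMod p) * d := by
        rw [eq_sub_iff_add_eq] at hxi
        rw [← hxi]
        push_cast
        ring
      rcases Nat.lt_or_ge (i + 1) k with hik | hik
      · exact hxI (mem_image.mpr ⟨i + 1, mem_range.mpr hik, hx_eq.symm⟩)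
      · rw [mem_range] at hi
        exact hnext (by rw [show k = i + 1 by omega, ← hx_eq]; exact hxS)
    exact (mem_sdiff.mp (hRu ▸ mem_univ a)).2 haI

lemma eq_image_range_of_leftEnds_eq_singleton (hd : d ≠ 0) {S : Finset (ZMod p)}
    (hSp : S.card < p) {a : ZMod p} (ha : leftEnds d S = {a}) :
    S = (range S.card).image fun i : ℕ => a + (i : ZMod p) * d :=
  (eq_of_subset_of_card_le (image_range_subset_of_leftEnds_eq_singleton hd ha le_rfl)
    (card_image_range_add_mul hd a hSp.le).ge).symm

end ZMod

theorem stmt5_general (p : ℕ) (hp : p.Prime) (A B : Finset (ZMod p))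
    (hA : A.Nonempty) (hB3 : 3 ≤ B.card) (d : ZMod p)
    (hsum : (A + B).card ≤ A.card + B.card)
    (hlt : A.card + B.card < p)
    (hAP : IsAPWith B d) :
    IsAPWith (A + B) d := by
  have := Fact.mk hp
  obtain ⟨hd, b, hB⟩ := hAP
  obtain ⟨m, hm⟩ : ∃ m, B.card = m + 1 := ⟨B.card - 1, by omega⟩
  have hAB : A + B = A + {b} + (range (m + 1)).image (· • d) := by
    rw [add_assoc, singleton_add, vadd_finset_def, image_image, hB, hm]
    simp [Function.comp_def, nsmul_eq_mul]
  have hABp : (A + B).card < p := hsum.trans_lt hlt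
  obtain ⟨a, ha⟩ : ∃ a, leftEnds d (A + B) = {a} := by
    refine card_eq_one.mp (le_antisymm ?_ ?_)
    · have := card_add_mul_card_leftEnds_le d (A + {b}) m
      rw [← hAB, card_add_singleton] at this
      nlinarith
    · exact card_pos.mpr <| ZMod.leftEnds_nonempty hd (hA.add (card_pos.mp (by omega))) hABp
  exact ⟨hd, a, ZMod.eq_image_range_of_leftEnds_eq_singleton hd hABp ha⟩

theorem stmt5 (p : ℕ) (hp : p.Prime) (A B : Finset (ZMod p))
    (hA : A.Nonempty) (hB : B.Nonempty) (hB3 : 3 ≤ B.card) (d : ZMod p)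
    (hsum : (A + B).card ≤ A.card + B.card)
    (hlt : A.card + B.card < p)
    (hAP : IsAPWith B d) :
    IsAPWith (A + B) d :=
  stmt5_general p hp A B hA hB3 d hsum hlt hAP
end

section
/- Let n ≥ 3 be odd and let G = Z/nZ. Let S1 = 0^{n−2}·1·(−1) (the sequence consisting of n−2 copies of 0, one copy of 1, and one copy of −1) and let S2 = 0·1·2⋯(n−1) (the sequence containing each element of G exactly once). Then σ(S1) = σ(S2) = 0 and 0 ∉ S1·S2. -/
/-! Pairing `S1 = 0^m · 1 · (-1)` with a sequence `T` of distinct terms, every term of `T` is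
multiplied by `0` except two distinct ones `a` and `b`, multiplied by `1` and `-1`; the weighted
sum is therefore `a - b ≠ 0`. The sum of `S2` is `n (n - 1) / 2`, a multiple of `n` for odd `n`. -/

open Multiset

-- `zipWith` truncates to the shorter list, hence the equal cardinalities.
lemma exists_pairing_of_mem_wProd {G : Type*} [CommRing G] {S T : Multiset G}
    (hcard : card S = card T) {g : G} (hg : g ∈ wProd S T) :
    ∃ P : Multiset (G × G), P.map Prod.fst = S ∧ P.map Prod.snd = T ∧
      (P.map fun p => p.1 * p.2).sum = g := by
  obtain ⟨l1, l2, rfl, rfl, rfl⟩ := hg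
  have hlen : l1.length = l2.length := by simpa using hcard
  refine ⟨l1.zip l2, ?_, ?_, ?_⟩
  · rw [map_coe, List.map_fst_zip hlen.le]
  · rw [map_coe, List.map_snd_zip hlen.ge]
  · rw [map_coe, sum_coe, List.map_zip_eq_zipWith]
    rfl

lemma sum_map_mul_ne_zero_of_map_fst_eq {R : Type*} [CommRing R] {P : Multiset (R × R)} {m : ℕ}
    (hfst : P.map Prod.fst = replicate m 0 + {1, -1}) (hsnd : (P.map Prod.snd).Nodup) :
    (P.map fun p => p.1 * p.2).sum ≠ 0 := by
  classical
  rw [add_comm, insert_eq_cons, cons_add, singleton_add] at hfst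
  obtain ⟨⟨_, a⟩, ha, rfl, hfst⟩ := (map_eq_cons _ _ _ _).2 hfst
  obtain ⟨⟨_, b⟩, hb, rfl, hzero⟩ := (map_eq_cons _ _ _ _).2 hfst
  set Q := (P.erase (1, a)).erase (-1, b)
  have hP : P = (1, a) ::ₘ (-1, b) ::ₘ Q := by rw [cons_erase hb, cons_erase ha]
  have hQ : (Q.map fun p => p.1 * p.2).sum = 0 := sum_eq_zero fun x hx => by
    obtain ⟨p, hp, rfl⟩ := mem_map.1 hx
    have hp0 : p.1 ∈ replicate m (0 : R) := hzero ▸ mem_map_of_mem Prod.fst hp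
    rw [eq_of_mem_replicate hp0, zero_mul]
  rw [hP, map_cons, map_cons, nodup_cons, mem_cons, not_or] at hsnd
  rw [hP, map_cons, map_cons, sum_cons, sum_cons, hQ]
  simpa [← sub_eq_add_neg, sub_eq_zero] using hsnd.1.1

lemma zero_notMem_wProd {R : Type*} [CommRing R] {S T : Multiset R} {m : ℕ}
    (hS : S = replicate m 0 + {1, -1}) (hT : T.Nodup) (hcard : card S = card T) :
    (0 : R) ∉ wProd S T := fun h0 => by
  obtain ⟨P, hfst, hsnd, hsum⟩ := exists_pairing_of_mem_wProd hcard h0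
  exact sum_map_mul_ne_zero_of_map_fst_eq (hfst.trans hS) (hsnd ▸ hT) hsum

lemma Odd.dvd_sum_range_id {n : ℕ} (hn : Odd n) : n ∣ ∑ i ∈ Finset.range n, i := by
  obtain ⟨k, rfl⟩ := hn
  refine ⟨k, ?_⟩
  have h := Finset.sum_range_id_mul_two (2 * k + 1)
  rw [Nat.add_sub_cancel] at h
  nlinarith

lemma sum_map_natCast_range_eq_zero {n : ℕ} (hn : Odd n) :
    ((range n).map (Nat.cast : ℕ → ZMod n)).sum = 0 := by
  rw [← Nat.cast_multiset_sum, ZMod.natCast_eq_zero_iff]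
  simpa [Finset.sum] using hn.dvd_sum_range_id

lemma nodup_map_natCast_range (n : ℕ) : ((range n).map (Nat.cast : ℕ → ZMod n)).Nodup :=
  (nodup_map_iff_inj_on (nodup_range n)).2 fun x hx y hy hxy => by
    rwa [ZMod.natCast_eq_natCast_iff' x y n, Nat.mod_eq_of_lt (mem_range.1 hx),
      Nat.mod_eq_of_lt (mem_range.1 hy)] at hxy

theorem stmt6 (n : ℕ) (hn : 3 ≤ n) (hodd : Odd n)
    (S1 S2 : Multiset (ZMod n))
    (hS1 : S1 = Multiset.replicate (n - 2) (0 : ZMod n) + {1, -1})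
    (hS2 : S2 = (Multiset.range n).map (fun i => (i : ZMod n))) :
    S1.sum = 0 ∧ S2.sum = 0 ∧ (0 : ZMod n) ∉ wProd S1 S2 := by
  -- In `hS2` the ascription `(i : ZMod n)` coerces `range n` monadically, as a `bind`.
  replace hS2 : S2 = (range n).map (Nat.cast : ℕ → ZMod n) := by simpa [bind_singleton] using hS2
  have hcard : card S1 = card S2 := by
    simp only [hS1, hS2, insert_eq_cons, add_cons, card_cons, card_add, card_replicate,
      card_singleton, card_map, card_range]
    omega
  exact ⟨by simp [hS1], hS2 ▸ sum_map_natCast_range_eq_zero hodd,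
    zero_notMem_wProd hS1 (hS2 ▸ nodup_map_natCast_range n) hcard⟩
end

section
/- Let n > 7, let G = Z/nZ, let x = ⌈(2n+2)/5⌉, and let S1 = S2 = 0^x·1^x·2^{n−2x} (the sequence with x copies of 0, x copies of 1, and n−2x copies of 2 in G). Then max{h(S1), h(S2)} = ⌈(2n+2)/5⌉, every element of S1·S2 is the reduction mod n of an integer in the interval [n−2x, 4(n−2x)+x], and consequently |S1·S2| ≤ 3n − 5x + 1 ≤ n − 1; in particular S1·S2 ≠ G. -/
lemma zipsum_le (p : ℤ → ℤ) : ∀ (A B : List ℤ), (∀ a ∈ A, ∀ b ∈ B, 2*(a*b) ≤ p a + p b) →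
    A.length = B.length → 2 * (List.zipWith (· * ·) A B).sum ≤ (A.map p).sum + (B.map p).sum
  | [], [], _, _ => by simp
  | a :: A, b :: B, h, hl => by
    simp only [List.zipWith_cons_cons, List.sum_cons, List.map_cons]
    have ih := zipsum_le p A B (fun a ha b hb => h a (by simp [ha]) b (by simp [hb]))
      (by simpa using hl)
    have := h a (by simp) b (by simp)
    linarith

lemma zipsum_ge (p : ℤ → ℤ) : ∀ (A B : List ℤ), (∀ a ∈ A, ∀ b ∈ B, p a + p b ≤ 2*(a*b)) →
    A.length = B.length → (A.map p).sum + (B.map p).sum ≤ 2 * (List.zipWith (· * ·) A B).sum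
  | [], [], _, _ => by simp
  | a :: A, b :: B, h, hl => by
    simp only [List.zipWith_cons_cons, List.sum_cons, List.map_cons]
    have ih := zipsum_ge p A B (fun a ha b hb => h a (by simp [ha]) b (by simp [hb]))
      (by simpa using hl)
    have := h a (by simp) b (by simp)
    linarith

lemma cast_zip {n : ℕ} (f : ZMod n → ℤ) : ∀ (l1 l2 : List (ZMod n)),
    (∀ a ∈ l1, ((f a : ℤ) : ZMod n) = a) → (∀ b ∈ l2, ((f b : ℤ) : ZMod n) = b) →
    (((List.zipWith (· * ·) (l1.map f) (l2.map f)).sum : ℤ) : ZMod n) =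
      (List.zipWith (· * ·) l1 l2).sum
  | [], _, _, _ => by simp
  | a :: A, [], _, _ => by simp
  | a :: A, b :: B, h1, h2 => by
    simp only [List.map_cons, List.zipWith_cons_cons, List.sum_cons]
    rw [Int.cast_add, Int.cast_mul, h1 a (by simp), h2 b (by simp),
      cast_zip f A B (fun a ha => h1 a (by simp [ha])) (fun b hb => h2 b (by simp [hb]))]

/-- `h(S)`: the maximum multiplicity of a term in the sequence `S`. -/
def maxMult {G : Type*} [DecidableEq G] (S : Multiset G) : ℕ :=
  S.toFinset.sup fun g => S.count g

theorem stmt8 (n : ℕ) (hn : 7 < n) (x : ℕ) (hx : x = ⌈(2 * (n : ℚ) + 2) / 5⌉₊)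
    (S1 S2 : Multiset (ZMod n))
    (hS1 : S1 = Multiset.replicate x (0 : ZMod n) + Multiset.replicate x (1 : ZMod n) +
        Multiset.replicate (n - 2 * x) (2 : ZMod n))
    (hS2 : S2 = S1) :
    max (maxMult S1) (maxMult S2) = x ∧
    (∀ g ∈ wProd S1 S2, ∃ m : ℤ, (n : ℤ) - 2 * x ≤ m ∧ m ≤ 4 * ((n : ℤ) - 2 * x) + x ∧
      g = (m : ZMod n)) ∧
    ((wProd S1 S2).ncard : ℤ) ≤ 3 * n - 5 * x + 1 ∧
    (3 * (n : ℤ) - 5 * x + 1) ≤ (n : ℤ) - 1 ∧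
    wProd S1 S2 ≠ Set.univ := by
  rw [hS2]
  -- arithmetic facts about x
  have hx5l : 2 * n + 2 ≤ 5 * x := by
    have h := Nat.le_ceil ((2 * (n:ℚ) + 2) / 5)
    rw [← hx] at h
    have h' : (2 * (n:ℚ) + 2) ≤ 5 * x := by
      rw [div_le_iff₀ (by norm_num : (0:ℚ) < 5)] at h; linarith
    exact_mod_cast h'
  have hx5u : 5 * x ≤ 2 * n + 6 := by
    have h : (x : ℚ) < (2 * (n:ℚ) + 2) / 5 + 1 := by
      rw [hx]; exact Nat.ceil_lt_add_one (by positivity)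
    have h' : (5:ℚ) * x < 2 * n + 7 := by
      rw [div_add' _ _ _ (by norm_num : (5:ℚ) ≠ 0), lt_div_iff₀ (by norm_num : (0:ℚ) < 5)] at h
      linarith
    have : 5 * x < 2 * n + 7 := by exact_mod_cast h'
    omega
  have h2x : 2 * x ≤ n := by omega
  have hyx : n - 2 * x ≤ x := by omega
  have hx1 : 1 ≤ x := by omega
  haveI : NeZero n := ⟨by omega⟩
  -- distinctness of 0,1,2 in ZMod n
  have e1 : ((1:ℕ) : ZMod n) = (1 : ZMod n) := by norm_cast
  have e2 : ((2:ℕ) : ZMod n) = (2 : ZMod n) := by norm_cast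
  have h10 : (1 : ZMod n) ≠ 0 := by
    intro h
    have := ZMod.val_cast_of_lt (show 1 < n by omega)
    rw [e1, h, ZMod.val_zero] at this; omega
  have h20 : (2 : ZMod n) ≠ 0 := by
    intro h
    have := ZMod.val_cast_of_lt (show 2 < n by omega)
    rw [e2, h, ZMod.val_zero] at this; omega
  have h21 : (2 : ZMod n) ≠ 1 := by
    intro h
    have v2 := ZMod.val_cast_of_lt (show 2 < n by omega)
    have v1 := ZMod.val_cast_of_lt (show 1 < n by omega)
    rw [e2, h, ← e1, v1] at v2; omega
  -- the lift f
  set f : ZMod n → ℤ := fun g => if g = 0 then 0 else if g = 1 then 1 else 2 with hf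
  have hf0 : f 0 = 0 := by simp [hf]
  have hf1 : f 1 = 1 := by simp [hf, h10]
  have hf2 : f 2 = 2 := by simp [hf, h20, h21]
  have hmemS1 : ∀ g ∈ S1, g = 0 ∨ g = 1 ∨ g = 2 := by
    intro g hg
    rw [hS1] at hg
    simp only [Multiset.mem_add] at hg
    rcases hg with (hg | hg) | hg
    · exact Or.inl (Multiset.eq_of_mem_replicate hg)
    · exact Or.inr (Or.inl (Multiset.eq_of_mem_replicate hg))
    · exact Or.inr (Or.inr (Multiset.eq_of_mem_replicate hg))
  have castS1 : ∀ g ∈ S1, ((f g : ℤ) : ZMod n) = g := by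
    intro g hg
    rcases hmemS1 g hg with rfl | rfl | rfl
    · rw [hf0]; push_cast; ring
    · rw [hf1]; push_cast; ring
    · rw [hf2]; push_cast; ring
  have hfim : ∀ g : ZMod n, f g = 0 ∨ f g = 1 ∨ f g = 2 := by
    intro g; simp only [hf]; split_ifs <;> simp
  -- lengths
  have hcardS1 : Multiset.card S1 = n := by
    rw [hS1]; simp [Multiset.card_replicate]; omega
  have hlen : ∀ l : List (ZMod n), (l : Multiset (ZMod n)) = S1 → l.length = n := by
    intro l hl
    have := congrArg Multiset.card hl
    rwa [Multiset.coe_card, hcardS1] at this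
  -- sum of p ∘ f over a permutation list of S1
  have hsumf : ∀ (p : ℤ → ℤ) (l : List (ZMod n)), (l : Multiset (ZMod n)) = S1 →
      ((l.map f).map p).sum = x * p 0 + x * p 1 + (n - 2*x : ℕ) * p 2 := by
    intro p l hl
    have h1 : ((l.map f).map p : List ℤ).sum = ((S1.map f).map p).sum := by
      rw [← hl]; simp [Multiset.map_coe, Multiset.sum_coe]
    rw [h1, hS1]
    simp only [Multiset.map_add, Multiset.map_replicate, Multiset.sum_add,
      Multiset.sum_replicate, hf0, hf1, hf2, smul_eq_mul]
    push_cast; ring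
  -- main membership statement
  have hmain : ∀ g ∈ wProd S1 S1, ∃ m : ℤ, (n : ℤ) - 2 * x ≤ m ∧
      m ≤ 4 * ((n : ℤ) - 2 * x) + x ∧ g = (m : ZMod n) := by
    rintro g ⟨l1, l2, hl1, hl2, hsum⟩
    have hmem1 : ∀ a ∈ l1, ((f a : ℤ) : ZMod n) = a := fun a ha => castS1 a (hl1 ▸ ha)
    have hmem2 : ∀ a ∈ l2, ((f a : ℤ) : ZMod n) = a := fun a ha => castS1 a (hl2 ▸ ha)
    refine ⟨(List.zipWith (· * ·) (l1.map f) (l2.map f)).sum, ?_, ?_, ?_⟩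
    · -- lower bound
      have hpt : ∀ a ∈ l1.map f, ∀ b ∈ l2.map f,
          (if a = 0 then (-1:ℤ) else 1) + (if b = 0 then (-1:ℤ) else 1) ≤ 2 * (a * b) := by
        intro a ha b hb
        rcases List.mem_map.1 ha with ⟨g1, _, rfl⟩
        rcases List.mem_map.1 hb with ⟨g2, _, rfl⟩
        rcases hfim g1 with h | h | h <;> rcases hfim g2 with h' | h' | h' <;>
          rw [h, h'] <;> norm_num
      have hlen' : (l1.map f).length = (l2.map f).length := by
        simp [hlen l1 hl1, hlen l2 hl2]
      have := zipsum_ge (fun a => if a = 0 then (-1:ℤ) else 1) (l1.map f) (l2.map f) hpt hlen'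
      rw [hsumf _ l1 hl1, hsumf _ l2 hl2] at this
      simp only [if_pos rfl] at this
      norm_num at this
      have hc : ((n - 2*x : ℕ) : ℤ) = (n : ℤ) - 2 * x := by push_cast [h2x]; ring
      rw [hc] at this
      simp only [List.zipWith_map]
      linarith
    · -- upper bound
      have hpt : ∀ a ∈ l1.map f, ∀ b ∈ l2.map f, 2 * (a * b) ≤ a * a + b * b := by
        intro a _ b _; nlinarith [sq_nonneg (a - b)]
      have hlen' : (l1.map f).length = (l2.map f).length := by
        simp [hlen l1 hl1, hlen l2 hl2]
      have := zipsum_le (fun a => a * a) (l1.map f) (l2.map f) hpt hlen'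
      rw [hsumf _ l1 hl1, hsumf _ l2 hl2] at this
      norm_num at this
      have hc : ((n - 2*x : ℕ) : ℤ) = (n : ℤ) - 2 * x := by push_cast [h2x]; ring
      rw [hc] at this
      simp only [List.zipWith_map]
      linarith
    · rw [← hsum, ← cast_zip f l1 l2 hmem1 hmem2]
  -- maxMult
  have hcount0 : S1.count 0 = x := by
    rw [hS1]
    rw [Multiset.count_add, Multiset.count_add, Multiset.count_replicate,
      Multiset.count_replicate, Multiset.count_replicate]
    rw [if_pos rfl, if_neg h10, if_neg h20]
    omega
  have hcountle : ∀ g : ZMod n, S1.count g ≤ x := by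
    intro g
    rw [hS1]
    rw [Multiset.count_add, Multiset.count_add, Multiset.count_replicate,
      Multiset.count_replicate, Multiset.count_replicate]
    split_ifs <;> first | omega | simp_all
  have hmm : maxMult S1 = x := by
    apply le_antisymm
    · exact Finset.sup_le fun g _ => hcountle g
    · have hmem : (0 : ZMod n) ∈ S1.toFinset := by
        rw [Multiset.mem_toFinset, hS1]
        exact Multiset.mem_add.2 (Or.inl (Multiset.mem_add.2 (Or.inl
          (Multiset.mem_replicate.2 ⟨by omega, rfl⟩))))
      calc x = S1.count 0 := hcount0.symm
        _ ≤ _ := Finset.le_sup (f := fun g => S1.count g) hmem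
  -- ncard bound
  set T : Finset (ZMod n) :=
    (Finset.Icc ((n:ℤ) - 2*x) (4*((n:ℤ) - 2*x) + x)).image (fun m : ℤ => (m : ZMod n)) with hT
  have hsub : wProd S1 S1 ⊆ ↑T := by
    intro g hg
    obtain ⟨m, h1, h2, rfl⟩ := hmain g hg
    exact Finset.mem_coe.2 (Finset.mem_image.2 ⟨m, Finset.mem_Icc.2 ⟨h1, h2⟩, rfl⟩)
  have hcardle : (wProd S1 S1).ncard ≤ T.card := by
    have := Set.ncard_le_ncard hsub T.finite_toSet
    rwa [Set.ncard_coe_finset] at this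
  have hTcard : T.card ≤ (3*(n:ℤ) - 5*x + 1).toNat := by
    refine Finset.card_image_le.trans ?_
    rw [Int.card_Icc]
    apply le_of_eq
    congr 1
    ring
  have hncard : ((wProd S1 S1).ncard : ℤ) ≤ 3 * n - 5 * x + 1 := by
    have h := hcardle.trans hTcard
    omega
  have hfinal : (3 * (n:ℤ) - 5 * x + 1) ≤ (n : ℤ) - 1 := by omega
  refine ⟨by rw [hmm]; simp, hmain, hncard, hfinal, ?_⟩
  intro h
  have huniv : (Set.univ : Set (ZMod n)).ncard = n := by
    rw [Set.ncard_univ, Nat.card_zmod]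
  rw [h, huniv] at hncard
  omega
end

section
/- Let G be a set, let n and h be positive integers with n/3 < h < n/2 (so that 0 < n − 2h and 0 < 3h − n), and let S be a multiset over G with |S| = n whose maximum multiplicity h(S) satisfies h(S) ≤ h. Then S can be factored as S = U_1⋯U_h, where each U_i is a square-free sub-multiset of S (i.e., a subset of G), with |U_i| = 3 for 1 ≤ i ≤ n − 2h and |U_i| = 2 for n − 2h < i ≤ h. -/
lemma join_blocks_spacing {G : Type*} (h : ℕ) :
    ∀ (bs : List (List G)),
    (∀ b ∈ bs, b.length ≤ h ∧ ∀ x ∈ b, ∀ y ∈ b, x = y) →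
    bs.Pairwise (fun b c => ∀ x ∈ b, ∀ y ∈ c, x ≠ y) →
    ∀ p q : ℕ, ∀ (hpq : p < q) (hq : q < bs.flatten.length),
      bs.flatten[p]'(hpq.trans hq) = bs.flatten[q]'hq → q - p < h := by
  intro bs
  induction bs with
  | nil => intro _ _ p q hpq hq; simp at hq
  | cons b rest ih =>
    intro hb hd p q hpq hq heq
    have hbl : b.length ≤ h ∧ ∀ x ∈ b, ∀ y ∈ b, x = y := hb b (by simp)
    rw [List.pairwise_cons] at hd
    have hflat : (b :: rest).flatten = b ++ rest.flatten := rfl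
    by_cases hqb : q < b.length
    · omega
    · by_cases hpb : p < b.length
      · exfalso
        have h1 : (b :: rest).flatten[p]'(hpq.trans hq) = b[p]'hpb := by
          rw [hflat] at *; exact List.getElem_append_left hpb
        have hlen : q - b.length < rest.flatten.length := by
          simp only [hflat, List.length_append] at hq; omega
        have h2 : (b :: rest).flatten[q]'hq = rest.flatten[q - b.length]'hlen := by
          rw [hflat] at *; exact List.getElem_append_right (by omega)
        have hmem1 : b[p]'hpb ∈ b := List.getElem_mem _
        have hmem2 : rest.flatten[q - b.length]'hlen ∈ rest.flatten := List.getElem_mem _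
        rw [List.mem_flatten] at hmem2
        obtain ⟨c, hc, hmemc⟩ := hmem2
        exact hd.1 c hc _ hmem1 _ hmemc (by rw [← h1, ← h2, heq])
      · have hlen : q - b.length < rest.flatten.length := by
          simp only [hflat, List.length_append] at hq; omega
        have h1 : (b :: rest).flatten[p]'(hpq.trans hq)
            = rest.flatten[p - b.length]'(by omega) := by
          rw [hflat] at *; exact List.getElem_append_right (by omega)
        have h2 : (b :: rest).flatten[q]'hq = rest.flatten[q - b.length]'hlen := by
          rw [hflat] at *; exact List.getElem_append_right (by omega)
        have := ih (fun c hc => hb c (by simp [hc])) hd.2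
          (p - b.length) (q - b.length) (by omega) hlen (by rw [← h1, ← h2, heq])
        omega


theorem stmt12 (G : Type*) [DecidableEq G] (n h : ℕ) (hn : 0 < n) (hh : 0 < h)
    (h1 : n < 3 * h) (h2 : 2 * h < n)
    (S : Multiset G) (hcard : Multiset.card S = n) (hmax : maxMult S ≤ h) :
    ∃ U : Fin h → Multiset G,
      (∑ i, U i) = S ∧
      (∀ i, (U i).Nodup) ∧
      (∀ i : Fin h, Multiset.card (U i) = if (i : ℕ) < n - 2 * h then 3 else 2) := by
  obtain ⟨g0, hg0⟩ : ∃ g, g ∈ S := Multiset.card_pos_iff_exists_mem.mp (by omega)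
  set bs : List (List G) := S.toFinset.toList.map (fun g => List.replicate (S.count g) g)
    with hbs
  set L : List G := bs.flatten with hLdef
  have hLS : (L : Multiset G) = S := by
    have coe_flatten : ∀ (l : List (List G)),
        Multiset.ofList l.flatten = (l.map Multiset.ofList).sum := by
      intro l
      induction l with
      | nil => rfl
      | cons b r ih =>
        rw [List.flatten_cons, List.map_cons, List.sum_cons, ← ih, ← Multiset.coe_add]
    rw [hLdef, hbs]
    rw [show ((((S.toFinset.toList.map (fun g => List.replicate (S.count g) g)).flatten :
        List G)) : Multiset G) = Multiset.ofList _ from rfl]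
    rw [coe_flatten, List.map_map]
    have he : (Multiset.ofList ∘ fun g => List.replicate (S.count g) g)
        = fun g => (S.count g) • ({g} : Multiset G) := by
      funext g
      simp only [Function.comp_apply, Multiset.coe_replicate, Multiset.nsmul_singleton]
    rw [he, Finset.sum_map_toList, Multiset.toFinset_sum_count_nsmul_eq]
  have hlen : L.length = n := by
    have := congrArg Multiset.card hLS
    simpa [hcard] using this
  have hspace : ∀ p q : ℕ, ∀ (hpq : p < q) (hq : q < L.length),
      L[p]'(hpq.trans hq) = L[q]'hq → q - p < h := by
    apply join_blocks_spacing
    · intro b hb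
      rw [hbs, List.mem_map] at hb
      obtain ⟨g, hg, rfl⟩ := hb
      refine ⟨?_, ?_⟩
      · simp only [List.length_replicate]
        calc S.count g ≤ maxMult S :=
              Finset.le_sup (f := fun g => S.count g) (by simpa using hg)
          _ ≤ h := hmax
      · intro x hx y hy
        rw [List.eq_of_mem_replicate hx, List.eq_of_mem_replicate hy]
    · rw [hbs]
      apply List.Pairwise.map (R := fun g g' : G => g ≠ g')
      · intro g g' hne x hx y hy
        rw [List.eq_of_mem_replicate hx, List.eq_of_mem_replicate hy]
        exact hne
      · exact S.toFinset.nodup_toList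
  clear_value L
  clear hLdef
  -- the construction
  set f : ℕ → G := fun k => L.getD k g0 with hf
  refine ⟨fun i => (((Finset.range n).filter (fun k => k % h = (i : ℕ))).val.map f),
    ?_, ?_, ?_⟩
  · -- sum
    have hpart : ∑ i : Fin h, ((Finset.range n).filter (fun k => k % h = (i : ℕ))).val
        = (Finset.range n).val := by
      ext a
      rw [Multiset.count_sum']
      by_cases ha : a < n
      · have key : ∀ i : Fin h,
            Multiset.count a ((Finset.range n).filter (fun k => k % h = (i : ℕ))).val
            = if i = (⟨a % h, Nat.mod_lt a hh⟩ : Fin h) then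
                Multiset.count a (Finset.range n).val else 0 := by
          intro i
          rw [Finset.filter_val, Multiset.count_filter]
          congr 1
          simp only [eq_iff_iff, Fin.ext_iff]
          exact ⟨fun hh' => hh'.symm, fun hh' => hh'.symm⟩
        rw [Finset.sum_congr rfl (fun i _ => key i), Finset.sum_ite_eq']
        simp
      · have : Multiset.count a (Finset.range n).val = 0 := by
          rw [Multiset.count_eq_zero]
          simp [ha]
        rw [this]
        apply Finset.sum_eq_zero
        intro i _
        rw [Multiset.count_eq_zero]
        simp only [Finset.filter_val, Multiset.mem_filter]
        rintro ⟨hmem, -⟩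
        exact ha (by simpa using hmem)
    show ∑ i : Fin h,
        Multiset.map f (((Finset.range n).filter (fun k => k % h = (i : ℕ))).val) = S
    have hsum : ∑ i : Fin h,
        Multiset.map f (((Finset.range n).filter (fun k => k % h = (i : ℕ))).val)
        = Multiset.map f ((Finset.range n).val) := by
      rw [← hpart]
      exact (map_sum (Multiset.mapAddMonoidHom f)
        (fun i : Fin h => ((Finset.range n).filter (fun k => k % h = (i : ℕ))).val)
        Finset.univ).symm
    rw [hsum, Finset.range_val, show Multiset.range n = ((List.range n : List ℕ) : Multiset ℕ)
      from rfl, Multiset.map_coe]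
    have hList : (List.range n).map f = L := by
      apply List.ext_getElem
      · simp [hlen]
      · intro k h1' h2'
        simp only [List.getElem_map, List.getElem_range, hf]
        exact List.getD_eq_getElem L g0 h2'
    rw [hList, hLS]
  · -- nodup
    intro i
    apply Multiset.Nodup.map_on
    · intro a ha b hb hfab
      simp only [Finset.filter_val, Finset.range_val, Multiset.mem_filter,
        Multiset.mem_range] at ha hb
      by_contra hne
      rcases Nat.lt_or_ge a b with hab | hab
      case _ =>
        have hdvd : h ∣ b - a := (Nat.modEq_iff_dvd' hab.le).mp (ha.2.trans hb.2.symm)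
        have hge : h ≤ b - a := Nat.le_of_dvd (by omega) hdvd
        have : b - a < h := by
          apply hspace a b hab (by omega)
          simp only [hf] at hfab
          rw [List.getD_eq_getElem L g0 (by omega : a < L.length),
            List.getD_eq_getElem L g0 (by omega : b < L.length)] at hfab
          exact hfab
        omega
      case _ =>
        have hab' : b < a := by omega
        have hdvd : h ∣ a - b := (Nat.modEq_iff_dvd' hab'.le).mp (hb.2.trans ha.2.symm)
        have hge : h ≤ a - b := Nat.le_of_dvd (by omega) hdvd
        have : a - b < h := by
          apply hspace b a hab' (by omega)
          simp only [hf] at hfab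
          rw [List.getD_eq_getElem L g0 (by omega : a < L.length),
            List.getD_eq_getElem L g0 (by omega : b < L.length)] at hfab
          exact hfab.symm
        omega
    · exact (Finset.filter _ _).nodup
  · -- cardinality
    intro i
    rw [Multiset.card_map]
    have hival : (i : ℕ) < h := i.isLt
    have hmods : ((i:ℕ)) % h = (i:ℕ) ∧ ((i:ℕ) + h) % h = (i:ℕ) ∧ ((i:ℕ) + 2*h) % h = (i:ℕ) := by
      refine ⟨Nat.mod_eq_of_lt hival, ?_, ?_⟩
      · rw [Nat.add_mod_right]; exact Nat.mod_eq_of_lt hival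
      · rw [Nat.add_mul_mod_self_right]; exact Nat.mod_eq_of_lt hival
    have hfwd : ∀ k, k < n → k % h = (i:ℕ) →
        k = (i:ℕ) ∨ k = (i:ℕ) + h ∨ k = (i:ℕ) + 2*h := by
      intro k hk hkmod
      have e := Nat.div_add_mod k h
      rw [hkmod] at e
      have hq3 : k / h < 3 := by
        rw [Nat.div_lt_iff_lt_mul hh]; omega
      generalize hq : k / h = q at e hq3
      interval_cases q <;> omega
    by_cases hi : (i : ℕ) < n - 2 * h
    · rw [if_pos hi]
      have hset : (Finset.range n).filter (fun k => k % h = (i : ℕ))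
          = {(i:ℕ), (i:ℕ) + h, (i:ℕ) + 2*h} := by
        ext k
        simp only [Finset.mem_filter, Finset.mem_range, Finset.mem_insert,
          Finset.mem_singleton]
        constructor
        · rintro ⟨hk, hkmod⟩; exact hfwd k hk hkmod
        · rintro (rfl | rfl | rfl)
          · exact ⟨by omega, hmods.1⟩
          · exact ⟨by omega, hmods.2.1⟩
          · exact ⟨by omega, hmods.2.2⟩
      rw [show ((((Finset.range n).filter (fun k => k % h = (i : ℕ))).val).card)
          = ((Finset.range n).filter (fun k => k % h = (i : ℕ))).card from rfl, hset]
      rw [Finset.card_insert_of_notMem (by simp; omega),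
        Finset.card_insert_of_notMem (by simp; omega), Finset.card_singleton]
    · rw [if_neg hi]
      have hset : (Finset.range n).filter (fun k => k % h = (i : ℕ))
          = {(i:ℕ), (i:ℕ) + h} := by
        ext k
        simp only [Finset.mem_filter, Finset.mem_range, Finset.mem_insert,
          Finset.mem_singleton]
        constructor
        · rintro ⟨hk, hkmod⟩
          rcases hfwd k hk hkmod with h' | h' | h'
          · exact Or.inl h'
          · exact Or.inr h'
          · omega
        · rintro (rfl | rfl)
          · exact ⟨by omega, hmods.1⟩
          · exact ⟨by omega, hmods.2.1⟩
      rw [show ((((Finset.range n).filter (fun k => k % h = (i : ℕ))).val).card)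
          = ((Finset.range n).filter (fun k => k % h = (i : ℕ))).card from rfl, hset]
      rw [Finset.card_insert_of_notMem (by simp; omega), Finset.card_singleton]
end
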